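/- arXiv:2111.13641 — 6 statements merged into one kernel-verified Lean document; each statement's English description precedes it below -/
import Mathlib

section
/- Let (K,v) be a valued field with algebraic closure K̄, and let v be extended to K̄(X) for an indeterminate X so that the extension (K(X)|K,v) is valuation transcendental. If (a,γ) is a minimal pair of definition for v over K, then v(X-b) = min{γ, v(a-b)} for every b ∈ K̄. -/
open IntermediateField Polynomial

namespace ValPaper

variable {Ω Γ : Type*} [Field Ω] [AddCommGroup Γ] [LinearOrder Γ] [IsOrderedAddMonoid Γ]

section Defs

variable (K : Type*) [Field K] [Algebra K Ω]

/-- The value group of an intermediate field `F` under the valuation `v`: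
the subgroup of `Γ` generated by (equal to) the set of values of nonzero elements of `F`. -/
noncomputable def valGroup (v : AddValuation Ω (WithTop Γ)) (F : IntermediateField K Ω) :
    AddSubgroup Γ :=
  AddSubgroup.closure {g : Γ | ∃ x ∈ F, x ≠ 0 ∧ v x = (g : WithTop Γ)}

/-- The ramification index `(vM : vF)`. -/
noncomputable def ramIndex (v : AddValuation Ω (WithTop Γ)) (F M : IntermediateField K Ω) : ℕ :=
  (valGroup K v F).relIndex (valGroup K v M)

/-- The valuation ring `O_F` of an intermediate field `F`. -/
noncomputable def integers (v : AddValuation Ω (WithTop Γ)) (F : IntermediateField K Ω) :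
    Subring Ω where
  carrier := {x | x ∈ F ∧ 0 ≤ v x}
  zero_mem' := ⟨zero_mem F, by simp⟩
  one_mem' := ⟨one_mem F, by simp⟩
  add_mem' := fun hx hy => ⟨add_mem hx.1 hy.1, le_trans (le_min hx.2 hy.2) (v.map_add _ _)⟩
  mul_mem' := fun hx hy => ⟨mul_mem hx.1 hy.1, by rw [v.map_mul]; exact add_nonneg hx.2 hy.2⟩
  neg_mem' := fun hx => ⟨neg_mem hx.1, by rw [v.map_neg]; exact hx.2⟩

/-- The maximal ideal of the valuation ring of `F`. -/
noncomputable def maxIdeal (v : AddValuation Ω (WithTop Γ)) (F : IntermediateField K Ω) :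
    Ideal (integers K v F) where
  carrier := {x | 0 < v (x : Ω)}
  zero_mem' := by
    show (0 : WithTop Γ) < v ((0 : integers K v F) : Ω)
    rw [show ((0 : integers K v F) : Ω) = 0 from rfl, v.map_zero]
    exact lt_of_le_of_ne le_top (by simp)
  add_mem' := fun {x y} hx hy => lt_of_lt_of_le (lt_min hx hy) (v.map_add _ _)
  smul_mem' := fun c {x} hx => by
    show (0 : WithTop Γ) < v ((c : Ω) * (x : Ω))
    rw [v.map_mul]
    exact lt_of_lt_of_le hx (le_add_of_nonneg_left c.2.2)

/-- The residue ring (in fact field) `Fv` of an intermediate field `F`. -/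
noncomputable abbrev Res (v : AddValuation Ω (WithTop Γ)) (F : IntermediateField K Ω) :=
  integers K v F ⧸ maxIdeal K v F

lemma integers_mono (v : AddValuation Ω (WithTop Γ)) {F M : IntermediateField K Ω} (h : F ≤ M) :
    integers K v F ≤ integers K v M := fun _ hx => ⟨h hx.1, hx.2⟩

/-- The canonical map between residue fields induced by an inclusion of intermediate fields. -/
noncomputable def resMap (v : AddValuation Ω (WithTop Γ)) {F M : IntermediateField K Ω}
    (h : F ≤ M) : Res K v F →+* Res K v M :=
  Ideal.quotientMap (maxIdeal K v M) (Subring.inclusion (integers_mono K v h))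
    (fun _ hx => hx)

set_option synthInstance.maxHeartbeats 1000000 in
open scoped Classical in
/-- The residue degree `[Mv : Fv]` (junk value `0` if `F ≰ M`). -/
noncomputable def resDeg (v : AddValuation Ω (WithTop Γ)) (F M : IntermediateField K Ω) : ℕ :=
  if h : F ≤ M then
    letI := (resMap K v h).toAlgebra
    Module.finrank (Res K v F) (Res K v M)
  else 0

/-- The defect `d(M|F,v)`, defined via the Lemma of Ostrowski as
`[M : F] / ((vM : vF) · [Mv : Fv])`. -/
noncomputable def defect (v : AddValuation Ω (WithTop Γ)) (F M : IntermediateField K Ω) : ℕ :=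
  relfinrank F M / (ramIndex K v F M * resDeg K v F M)

end Defs

section DefsBase

variable (F : Type*) [Field F] [Algebra F Ω]

open scoped Classical in
/-- `jnum v F a γ` is the number of `F`-conjugates `a'` of `a` (counted with multiplicity,
including `a` itself) such that `v (a - a') ≥ γ`. -/
noncomputable def jnum (v : AddValuation Ω (WithTop Γ)) (a : Ω) (γ : Γ) : ℕ :=
  Multiset.card (((minpoly F a).aroots Ω).filter fun r => (γ : WithTop Γ) ≤ v (a - r))

/-- `(a, γ)` is a minimal pair of definition for `v` over `F`:
(MP0) `a` is algebraic over `F` (i.e. `a ∈ F̄`),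
(MP1) `v (X - a) = γ = max v (X - F̄)`, and
(MP2) `v (a - b) ≥ γ` implies `[F(b) : F] ≥ [F(a) : F]` for all `b ∈ F̄`. -/
def IsMinimalPair (v : AddValuation Ω (WithTop Γ)) (X a : Ω) (γ : Γ) : Prop :=
  IsAlgebraic F a ∧ v (X - a) = (γ : WithTop Γ) ∧
    (∀ c : Ω, IsAlgebraic F c → v (X - c) ≤ (γ : WithTop Γ)) ∧
    ∀ b : Ω, IsAlgebraic F b → (γ : WithTop Γ) ≤ v (a - b) →
      Module.finrank F ↥(IntermediateField.adjoin F {a}) ≤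
        Module.finrank F ↥(IntermediateField.adjoin F {b})

/-- The decomposition group of `(F, v)` in `Ω`: all `F`-automorphisms compatible with `v`. -/
def decompGroup (v : AddValuation Ω (WithTop Γ)) : Subgroup (Ω ≃ₐ[F] Ω) where
  carrier := {σ | ∀ x : Ω, v (σ x) = v x}
  one_mem' := fun _ => rfl
  mul_mem' := fun {σ τ} hσ hτ x => by
    rw [AlgEquiv.mul_apply, hσ, hτ]
  inv_mem' := fun {σ} hσ x => by
    have h := hσ (σ⁻¹ x)
    rw [show σ (σ⁻¹ x) = x from AlgEquiv.apply_symm_apply σ x] at h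
    exact h.symm

/-- The henselization (= absolute decomposition field) of `(F, v)` inside `Ω`:
the elements of the separable closure of `F` fixed by the decomposition group. -/
noncomputable def henselAux (v : AddValuation Ω (WithTop Γ)) : IntermediateField F Ω :=
  separableClosure F Ω ⊓ IntermediateField.fixedField (decompGroup F v)

/-- The ramification group of `(F, v)` in `Ω`. -/
noncomputable def ramGroup (v : AddValuation Ω (WithTop Γ)) : Subgroup (Ω ≃ₐ[F] Ω) :=
  Subgroup.closure {σ | ∀ x ∈ separableClosure F Ω, x ≠ 0 → v x < v (σ x - x)}

/-- The absolute ramification field `F^r` of `(F, v)` inside `Ω`. -/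
noncomputable def ramField (v : AddValuation Ω (WithTop Γ)) : IntermediateField F Ω :=
  separableClosure F Ω ⊓ IntermediateField.fixedField (ramGroup F v)

end DefsBase

section DefsK

variable (K : Type*) [Field K] [Algebra K Ω]

/-- The henselization of an intermediate field `F`, viewed inside `IntermediateField K Ω`. -/
noncomputable def hensel (v : AddValuation Ω (WithTop Γ)) (F : IntermediateField K Ω) :
    IntermediateField K Ω :=
  (henselAux (↥F) v).restrictScalars K

/-- The relative algebraic closure `K̄` of `K` in `Ω` (as an intermediate field; when `Ω` is
algebraically closed this is an algebraic closure of `K`). -/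
noncomputable def algCl : IntermediateField K Ω :=
  IntermediateField.adjoin K {x : Ω | IsAlgebraic K x}

/-- The implicit constant field `IC (K(X)|K, v) := K̄ ∩ K(X)^h`. -/
noncomputable def ICfield (v : AddValuation Ω (WithTop Γ)) (X : Ω) : IntermediateField K Ω :=
  algCl K ⊓ hensel K v (IntermediateField.adjoin K {X})

/-- `(K(X)|K, v)` is value transcendental: `vK(X)/vK` has a nontorsion element,
i.e. `rat rk vK(X)/vK = 1`. -/
def ValueTrans (v : AddValuation Ω (WithTop Γ)) (X : Ω) : Prop :=
  ∃ g : Γ, g ∈ valGroup K v (IntermediateField.adjoin K {X}) ∧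
    ∀ n : ℕ, 0 < n → n • g ∉ valGroup K v (⊥ : IntermediateField K Ω)

/-- `(K(X)|K, v)` is residue transcendental: the residue field of `K(X)` contains an element
transcendental over the residue field of `K`, i.e. `trdeg (K(X)v | Kv) = 1`. -/
def ResidueTrans (v : AddValuation Ω (WithTop Γ)) (X : Ω) : Prop :=
  letI := (resMap K v (bot_le : (⊥ : IntermediateField K Ω) ≤
    IntermediateField.adjoin K {X})).toAlgebra
  ∃ ξ : Res K v (IntermediateField.adjoin K {X}),
    Transcendental (Res K v (⊥ : IntermediateField K Ω)) ξ

/-- `(K(X)|K, v)` is valuation transcendental: equality holds in the Abhyankar inequality,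
i.e. the extension is value transcendental or residue transcendental. -/
def ValuationTrans (v : AddValuation Ω (WithTop Γ)) (X : Ω) : Prop :=
  ValueTrans K v X ∨ ResidueTrans K v X

/-- `(K, v)` is a defectless field: every finite extension `M` of the henselization `K^h`
(inside `K̄ ⊆ Ω`) satisfies `[M : K^h] = (vM : vK^h)[Mv : K^h v]`. -/
def DefectlessField (v : AddValuation Ω (WithTop Γ)) : Prop :=
  ∀ M : IntermediateField K Ω, hensel K v ⊥ ≤ M → (∀ x ∈ M, IsAlgebraic K x) →
    relfinrank (hensel K v ⊥) M ≠ 0 →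
    relfinrank (hensel K v ⊥) M = ramIndex K v (hensel K v ⊥) M * resDeg K v (hensel K v ⊥) M

end DefsK

/-- The maximal ideal of the valuation ring is indeed maximal. -/
lemma maxIdeal_isMaximal (K : Type*) [Field K] [Algebra K Ω] (v : AddValuation Ω (WithTop Γ))
    (F : IntermediateField K Ω) : (maxIdeal K v F).IsMaximal := by
  rw [Ideal.isMaximal_iff]
  constructor
  · show ¬ (0 : WithTop Γ) < v ((1 : Ω))
    rw [v.map_one]
    exact lt_irrefl _
  · intro J x hIJ hxI hxJ
    have hx0 : 0 ≤ v (x : Ω) := x.2.2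
    have hxv : v (x : Ω) = 0 := le_antisymm (not_lt.mp hxI) hx0
    have hxne : (x : Ω) ≠ 0 := by
      intro h
      rw [h, v.map_zero] at hxv
      simp at hxv
    have hinv : v ((x : Ω)⁻¹) = 0 := by
      rw [v.map_inv, hxv]; simp
    have hmem : (x : Ω)⁻¹ ∈ integers K v F :=
      ⟨inv_mem (x.2.1 : (x : Ω) ∈ F), le_of_eq hinv.symm⟩
    have : (⟨(x : Ω)⁻¹, hmem⟩ * x : integers K v F) = 1 := by
      ext
      exact inv_mul_cancel₀ hxne
    have h1 : (⟨(x : Ω)⁻¹, hmem⟩ * x : integers K v F) ∈ J := J.mul_mem_left _ hxJ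
    rwa [this] at h1

/-- The residue ring of an intermediate field is a field. -/
noncomputable def resField (K : Type*) [Field K] [Algebra K Ω] (v : AddValuation Ω (WithTop Γ))
    (F : IntermediateField K Ω) : Field (Res K v F) :=
  letI := maxIdeal_isMaximal K v F
  Ideal.Quotient.field _

theorem _root_.AddValuation.map_sub_eq_min_of_map_sub_le {R Γ₀ : Type*} [Ring R]
    [LinearOrderedAddCommMonoidWithTop Γ₀] (v : AddValuation R Γ₀) {x a b : R}
    (hb : v (x - b) ≤ v (x - a)) : v (x - b) = min (v (x - a)) (v (a - b)) := by
  have hsplit : x - b = (x - a) + (a - b) := by abel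
  rcases lt_or_ge (v (a - b)) (v (x - a)) with hlt | hge
  · rw [min_eq_right hlt.le, hsplit, v.map_add_eq_of_lt_right hlt]
  · rw [min_eq_left hge]
    exact le_antisymm hb (hsplit ▸ v.map_le_add le_rfl hge)

theorem stmt_0_general {K Ω Γ : Type*} [Field K] [Field Ω] [Algebra K Ω]
    [AddCommGroup Γ] [LinearOrder Γ] [IsOrderedAddMonoid Γ]
    (v : AddValuation Ω (WithTop Γ)) (X : Ω) (a : Ω) (γ : Γ) (hmp : IsMinimalPair K v X a γ) :
    ∀ b : Ω, IsAlgebraic K b → v (X - b) = min (γ : WithTop Γ) (v (a - b)) := by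
  obtain ⟨-, hXa, hmax, -⟩ := hmp
  intro b hb
  rw [← hXa]
  exact v.map_sub_eq_min_of_map_sub_le (hXa ▸ hmax b hb)

/-- If `(a, γ)` is a minimal pair of definition for the valuation
transcendental extension `(K(X)|K, v)`, then `v (X - b) = min (γ, v (a - b))` for all `b ∈ K̄`. -/
theorem stmt_0 {K Ω Γ : Type*} [Field K] [Field Ω] [Algebra K Ω] [IsAlgClosed Ω]
    [AddCommGroup Γ] [LinearOrder Γ] [IsOrderedAddMonoid Γ]
    (v : AddValuation Ω (WithTop Γ)) (X : Ω) (hX : Transcendental K X)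
    [Algebra.IsAlgebraic ↥(IntermediateField.adjoin K {X}) Ω]
    (hvt : ValuationTrans K v X) (a : Ω) (γ : Γ) (hmp : IsMinimalPair K v X a γ) :
    ∀ b : Ω, IsAlgebraic K b → v (X - b) = min (γ : WithTop Γ) (v (a - b)) :=
  stmt_0_general v X a γ hmp

end ValPaper
end

section
/- Let (a,γ) be a minimal pair of definition for a residue transcendental extension (K(X)|K,v). Let E be the least positive integer with Eγ ∈ vK(a), write Q^E = Σ_{i=E}^{nE} c_i (X-a)^i with c_i ∈ K(a), where Q is the minimal polynomial of a over K. If v(c_i) + iγ = E·v(Q) for some index i, then E divides i. -/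
open IntermediateField Polynomial

namespace ValPaper

variable {Ω Γ : Type*} [Field Ω] [AddCommGroup Γ] [LinearOrder Γ] [IsOrderedAddMonoid Γ]

/-!
Over `Ω` the minimal polynomial `Q` of `a` splits, so the Taylor expansion of `Q^E` at `a` is
`∏ (X + β)` over the multiset `M` of the `a - r`, `r` a root of `Q`, each repeated `E` times.
Let `i₀` be the number of `β ∈ M` with `v β ≥ γ`. After weighting the coefficient of `X^j` by
`jγ`, the product of the `β` with `v β < γ` strictly dominates every other term of the
coefficient of `X^{i₀}`, so `v c_{i₀} + i₀γ = Σ_{β ∈ M} min(γ, v β)`. The minimal pair gives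
`v(X - r) = min(γ, v(a - r))`, so this sum is `E · v(Q(X))`.
Now `E ∣ i₀` because `M` consists of `E`-fold repetitions, while `v c_i + iγ = v c_{i₀} + i₀γ`
puts `(i - i₀)γ` into `vK(a)`, and `E` is the order of `γ` modulo `vK(a)`.
-/

theorem _root_.WithTop.multiset_sum_ne_top {M : Type*} [AddCommMonoid M]
    {s : Multiset (WithTop M)} (h : ∀ x ∈ s, x ≠ ⊤) : s.sum ≠ ⊤ :=
  Multiset.sum_induction (· ≠ ⊤) s (fun _ _ => (WithTop.add_ne_top.2 ⟨·, ·⟩)) WithTop.zero_ne_top h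

theorem _root_.WithTop.multiset_sum_lt_card_nsmul {M : Type*} [AddCommMonoid M] [LinearOrder M]
    [IsOrderedCancelAddMonoid M] {γ : M} {s : Multiset (WithTop M)} (hs : s ≠ 0)
    (h : ∀ x ∈ s, x < γ) : s.sum < Multiset.card s • (γ : WithTop M) := by
  induction s using Multiset.induction with
  | empty => exact absurd rfl hs
  | cons x s ih =>
    have hx : x < γ := h x (s.mem_cons_self x)
    rcases eq_or_ne s 0 with rfl | hs'
    · simpa using hx
    rw [Multiset.sum_cons, Multiset.card_cons, succ_nsmul']
    calc x + s.sum < x + Multiset.card s • (γ : WithTop M) :=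
          WithTop.add_lt_add_left hx.ne_top (ih hs' fun y hy => h y (Multiset.mem_cons_of_mem hy))
      _ < γ + Multiset.card s • (γ : WithTop M) :=
          WithTop.add_lt_add_right (by simp [← WithTop.coe_nsmul]) hx

section LinearOrderedAddCommMonoidWithTop

variable {R Γ₀ : Type*} [CommRing R] [LinearOrderedAddCommMonoidWithTop Γ₀]
  (v : AddValuation R Γ₀)

theorem _root_.AddValuation.map_multiset_prod (s : Multiset R) : v s.prod = (s.map v).sum := by
  induction s using Multiset.induction with
  | empty => simp
  | cons x s ih => simp [ih]

theorem _root_.AddValuation.le_map_multiset_sum {g : Γ₀} {s : Multiset R}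
    (h : ∀ x ∈ s, g ≤ v x) : g ≤ v s.sum := by
  induction s using Multiset.induction with
  | empty => simp
  | cons x s ih =>
    rw [Multiset.sum_cons]
    exact v.map_le_add (h x (s.mem_cons_self x)) (ih fun y hy => h y (Multiset.mem_cons_of_mem hy))

theorem _root_.AddValuation.lt_map_multiset_sum_add {c d : Γ₀} (hc : c ≠ ⊤) {s : Multiset R}
    (h : ∀ x ∈ s, c < v x + d) : c < v s.sum + d := by
  induction s using Multiset.induction with
  | empty => simpa using hc.lt_top
  | cons x s ih =>
    rw [Multiset.sum_cons]
    calc c < min (v x) (v s.sum) + d := by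
          rw [← min_add_add_right]
          exact lt_min (h x (s.mem_cons_self x)) (ih fun y hy => h y (Multiset.mem_cons_of_mem hy))
      _ ≤ v (x + s.sum) + d := by gcongr; exact v.map_add x s.sum

theorem _root_.AddValuation.nsmul_le_map_esymm {g : Γ₀} {s : Multiset R}
    (h : ∀ x ∈ s, g ≤ v x) (k : ℕ) : k • g ≤ v (s.esymm k) := by
  refine v.le_map_multiset_sum fun x hx => ?_
  obtain ⟨t, ht, rfl⟩ := Multiset.mem_map.1 hx
  obtain ⟨hts, rfl⟩ := Multiset.mem_powersetCard.1 ht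
  rw [v.map_multiset_prod, ← Multiset.card_map v]
  exact Multiset.card_nsmul_le_sum fun y hy => by
    obtain ⟨z, hz, rfl⟩ := Multiset.mem_map.1 hy
    exact h z (Multiset.mem_of_le hts hz)

theorem _root_.AddValuation.map_sub_eq_min_of_le {x a r : R} {γ : Γ₀} (hxa : v (x - a) = γ)
    (hxr : v (x - r) ≤ γ) : v (x - r) = min γ (v (a - r)) := by
  have hsum : x - r = (x - a) + (a - r) := by ring
  rcases lt_or_ge (v (a - r)) γ with h | h
  · rw [min_eq_right h.le, hsum, v.map_add_eq_of_lt_right (hxa ▸ h)]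
  · refine le_antisymm (hxr.trans (min_eq_left h).ge) ?_
    rw [hsum, ← hxa]
    exact v.map_add _ _

end LinearOrderedAddCommMonoidWithTop

section WithTop

variable {R : Type*} [CommRing R] (v : AddValuation R (WithTop Γ))

theorem _root_.AddValuation.map_multiset_prod_ne_top {s : Multiset R} (h : ∀ x ∈ s, v x ≠ ⊤) :
    v s.prod ≠ ⊤ := by
  rw [v.map_multiset_prod]
  exact WithTop.multiset_sum_ne_top (by simpa using h)

theorem _root_.AddValuation.map_prod_lt_map_esymm_add {γ : Γ} {s : Multiset R}
    (h : ∀ x ∈ s, v x < γ) {k : ℕ} (hk : k < Multiset.card s) :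
    v s.prod < v (s.esymm k) + (Multiset.card s - k) • (γ : WithTop Γ) := by
  refine v.lt_map_multiset_sum_add (v.map_multiset_prod_ne_top fun x hx => (h x hx).ne_top)
    fun x hx => ?_
  obtain ⟨t, ht, rfl⟩ := Multiset.mem_map.1 hx
  obtain ⟨hts, rfl⟩ := Multiset.mem_powersetCard.1 ht
  obtain ⟨u, rfl⟩ := Multiset.le_iff_exists_add.1 hts
  have hu : u ≠ 0 := by rintro rfl; simp at hk
  rw [Multiset.card_add, Nat.add_sub_cancel_left, Multiset.prod_add, v.map_mul,
    v.map_multiset_prod u, ← Multiset.card_map v u]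
  exact WithTop.add_lt_add_left
    (v.map_multiset_prod_ne_top fun x hx => (h x (Multiset.mem_add.2 (.inl hx))).ne_top)
    (WithTop.multiset_sum_lt_card_nsmul (by simpa using hu) (by
      simpa using fun x hx => h x (Multiset.mem_add.2 (.inr hx))))

theorem _root_.AddValuation.map_coeff_prod_X_add_C {γ : Γ} {s t : Multiset R}
    (hs : ∀ x ∈ s, v x < γ) (ht : ∀ x ∈ t, γ ≤ v x) :
    v (((s + t).map fun x => X + C x).prod.coeff (Multiset.card t)) = v s.prod := by
  classical
  set P := (s.map fun x => X + C x).prod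
  set Q := (t.map fun x => X + C x).prod
  have hsne : v s.prod ≠ ⊤ := v.map_multiset_prod_ne_top fun x hx => (hs x hx).ne_top
  have hP0 : P.coeff 0 = s.prod := by
    simp [P, coeff_zero_eq_eval_zero, eval_multiset_prod]
  have hQ : Q.coeff (Multiset.card t) = 1 := by
    simp [Q, Multiset.prod_X_add_C_coeff, Multiset.esymm]
  have hPdeg : P.natDegree ≤ Multiset.card s := by
    refine (natDegree_multiset_prod_le _).trans ?_
    simpa using Nat.mul_le_mul_left (Multiset.card s) (natDegree_X_le (R := R))
  have hrest : ∀ j ∈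
      (Finset.HasAntidiagonal.antidiagonal (Multiset.card t)).erase (0, Multiset.card t),
      v s.prod < v (P.coeff j.1 * Q.coeff j.2) := by
    rintro ⟨j₁, j₂⟩ hj
    obtain ⟨hj0, hj⟩ := Finset.mem_erase.1 hj
    rw [Finset.HasAntidiagonal.mem_antidiagonal] at hj
    have hj₁ : j₁ ≠ 0 := by rintro rfl; simp_all
    rcases le_or_gt j₁ (Multiset.card s) with hjs | hjs
    · rw [v.map_mul, Multiset.prod_X_add_C_coeff s hjs, Multiset.prod_X_add_C_coeff t (by omega),
        show Multiset.card t - j₂ = j₁ by omega]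
      calc v s.prod < v (s.esymm (Multiset.card s - j₁)) + j₁ • (γ : WithTop Γ) := by
            simpa [Nat.sub_sub_self hjs] using
              v.map_prod_lt_map_esymm_add hs (k := Multiset.card s - j₁) (by omega)
        _ ≤ _ := by gcongr; exact v.nsmul_le_map_esymm ht j₁
    · rw [coeff_eq_zero_of_natDegree_lt (hPdeg.trans_lt hjs), zero_mul, v.map_zero]
      exact hsne.lt_top
  have hmem : (0, Multiset.card t) ∈ Finset.HasAntidiagonal.antidiagonal (Multiset.card t) := by
    simp
  rw [Multiset.map_add, Multiset.prod_add, coeff_mul, ← Finset.add_sum_erase _ _ hmem, hP0, hQ,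
    mul_one]
  exact v.map_add_eq_of_lt_left (v.map_lt_sum hsne hrest)

theorem _root_.AddValuation.map_coeff_prod_X_add_C_add_nsmul (γ : Γ) (s : Multiset R) :
    v ((s.map fun x => X + C x).prod.coeff (Multiset.card (s.filter fun x => γ ≤ v x))) +
        Multiset.card (s.filter fun x => γ ≤ v x) • (γ : WithTop Γ) =
      (s.map fun x => min (γ : WithTop Γ) (v x)).sum := by
  have hsplit : s.filter (fun x => v x < γ) + s.filter (fun x => γ ≤ v x) = s := by
    simpa only [not_lt] using Multiset.filter_add_not (fun x => v x < γ) s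
  have hlow : ∀ x ∈ s.filter (fun x => v x < γ), v x < γ :=
    fun x hx => (Multiset.mem_filter.1 hx).2
  have hhigh : ∀ x ∈ s.filter (fun x => γ ≤ v x), γ ≤ v x :=
    fun x hx => (Multiset.mem_filter.1 hx).2
  have hcoeff := v.map_coeff_prod_X_add_C hlow hhigh
  rw [hsplit] at hcoeff
  conv_rhs => rw [← hsplit, Multiset.map_add, Multiset.sum_add]
  rw [hcoeff, v.map_multiset_prod]
  congr 1
  · exact congrArg _ (Multiset.map_congr rfl fun x hx => (min_eq_right (hlow x hx).le).symm)
  · rw [Multiset.map_congr rfl fun x hx => min_eq_left (hhigh x hx), Multiset.map_const',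
      Multiset.sum_replicate]

end WithTop

theorem _root_.Polynomial.Splits.taylor_eq_prod_roots_of_monic {R : Type*} [CommRing R]
    [IsDomain R] {f : R[X]} (hf : f.Splits) (hm : f.Monic) (a : R) :
    Polynomial.taylor a f = (f.roots.map fun r => X + C (a - r)).prod := by
  calc Polynomial.taylor a f = taylorAlgHom a (f.roots.map (X - C ·)).prod := by
        rw [taylorAlgHom_apply, ← hf.eq_prod_roots_of_monic hm]
    _ = _ := by
        rw [map_multiset_prod, Multiset.map_map]
        refine congrArg _ (Multiset.map_congr rfl fun r _ => ?_)
        simp only [Function.comp_apply, map_sub, taylorAlgHom_apply, taylor_X, taylor_C]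
        ring

theorem _root_.QuotientAddGroup.addOrderOf_mk_eq_of_minimal {A : Type*} [AddCommGroup A]
    {G : AddSubgroup A} {γ : A} {E : ℕ} (hE0 : 0 < E) (hEmem : E • γ ∈ G)
    (hEmin : ∀ E' : ℕ, 0 < E' → E' • γ ∈ G → E ≤ E') :
    addOrderOf (γ : A ⧸ G) = E := by
  rw [addOrderOf_eq_iff hE0]
  refine ⟨?_, fun m hmE hm0 hm => (hmE.trans_le (hEmin m hm0 ?_)).false⟩
  · rwa [← QuotientAddGroup.mk_nsmul, QuotientAddGroup.eq_zero_iff]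
  · rwa [← QuotientAddGroup.mk_nsmul, QuotientAddGroup.eq_zero_iff] at hm

section IntermediateField

variable {K : Type*} [Field K] [Algebra K Ω] (v : AddValuation Ω (WithTop Γ))

theorem coe_coeff_taylor {F : IntermediateField K Ω} (x : F) (p : F[X]) (j : ℕ) :
    ((taylor x p).coeff j : Ω) = (taylor (x : Ω) (p.map (algebraMap F Ω))).coeff j := by
  rw [← IntermediateField.algebraMap_apply, ← coeff_map, map_taylor]
  rfl

theorem coe_coeff_taylor_minpoly_pow [IsAlgClosed Ω] {a : Ω} (ha : IsIntegral K a) (E j : ℕ) :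
    ((taylor (⟨a, IntermediateField.mem_adjoin_simple_self K a⟩ : IntermediateField.adjoin K {a})
        (((minpoly K a).map (algebraMap K (IntermediateField.adjoin K {a}))) ^ E)).coeff j : Ω) =
      ((E • ((minpoly K a).aroots Ω).map (a - ·)).map fun β => X + C β).prod.coeff j := by
  have hm : ((minpoly K a).map (algebraMap K Ω)).Monic := (minpoly.monic ha).map _
  rw [coe_coeff_taylor, Polynomial.map_pow, Polynomial.map_map, ← IsScalarTower.algebraMap_eq,
    taylor_pow, (IsAlgClosed.splits _).taylor_eq_prod_roots_of_monic hm, Multiset.map_nsmul,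
    Multiset.prod_nsmul, Multiset.map_map, Function.comp_def]

theorem exists_mem_valGroup_eq {F : IntermediateField K Ω} {x : Ω} (hx : x ∈ F)
    (hx0 : v x ≠ ⊤) : ∃ g ∈ valGroup K v F, v x = g := by
  obtain ⟨g, hg⟩ := WithTop.ne_top_iff_exists.1 hx0
  exact ⟨g, AddSubgroup.subset_closure ⟨x, hx, v.ne_top_iff.1 hx0, hg.symm⟩, hg.symm⟩

theorem modEq_addOrderOf_of_map_add_nsmul_eq {F : IntermediateField K Ω} {x y : Ω} (hx : x ∈ F)
    (hy : y ∈ F) (hy0 : v y ≠ ⊤) {γ : Γ} {i j : ℕ}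
    (h : v x + ((i • γ : Γ) : WithTop Γ) = v y + ((j • γ : Γ) : WithTop Γ)) :
    i ≡ j [MOD addOrderOf (γ : Γ ⧸ valGroup K v F)] := by
  have hx0 : v x ≠ ⊤ := by
    rintro hx0
    rw [hx0, top_add] at h
    exact WithTop.add_ne_top.2 ⟨hy0, WithTop.coe_ne_top⟩ h.symm
  obtain ⟨g, hg, hxg⟩ := exists_mem_valGroup_eq v hx hx0
  obtain ⟨g', hg', hyg'⟩ := exists_mem_valGroup_eq v hy hy0
  rw [hxg, hyg', ← WithTop.coe_add, ← WithTop.coe_add, WithTop.coe_inj] at h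
  have hmk := congrArg (QuotientAddGroup.mk (s := valGroup K v F)) h
  simp only [QuotientAddGroup.mk_add, QuotientAddGroup.mk_nsmul,
    (QuotientAddGroup.eq_zero_iff _).2 hg, (QuotientAddGroup.eq_zero_iff _).2 hg', zero_add] at hmk
  exact nsmul_eq_nsmul_iff_modEq.1 hmk

theorem IsMinimalPair.map_aeval_minpoly [IsAlgClosed Ω] {X a : Ω} {γ : Γ}
    (hmp : IsMinimalPair K v X a γ) :
    v (aeval X (minpoly K a)) =
      (((minpoly K a).aroots Ω).map fun r => min (γ : WithTop Γ) (v (a - r))).sum := by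
  have hm : ((minpoly K a).map (algebraMap K Ω)).Monic := (minpoly.monic hmp.1.isIntegral).map _
  rw [aeval_def, ← eval_map, (IsAlgClosed.splits _).eval_eq_prod_roots, hm.leadingCoeff, one_mul,
    v.map_multiset_prod, Multiset.map_map]
  refine congrArg _ (Multiset.map_congr rfl fun r hr => ?_)
  have hr : IsAlgebraic K r :=
    ⟨minpoly K a, minpoly.ne_zero hmp.1.isIntegral, (mem_aroots.1 hr).2⟩
  exact v.map_sub_eq_min_of_le hmp.2.1 (hmp.2.2.1 r hr)

end IntermediateField

theorem stmt_5_general {K Ω Γ : Type*} [Field K] [Field Ω] [Algebra K Ω] [IsAlgClosed Ω]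
    [AddCommGroup Γ] [LinearOrder Γ] [IsOrderedAddMonoid Γ]
    (v : AddValuation Ω (WithTop Γ)) (X : Ω)
    (a : Ω) (γ : Γ) (hmp : IsMinimalPair K v X a γ)
    (E : ℕ) (hE0 : 0 < E) (hEmem : E • γ ∈ valGroup K v (IntermediateField.adjoin K {a}))
    (hEmin : ∀ E' : ℕ, 0 < E' → E' • γ ∈ valGroup K v (IntermediateField.adjoin K {a}) → E ≤ E') :
    ∀ i : ℕ,
      v (((Polynomial.taylor
            (⟨a, IntermediateField.mem_adjoin_simple_self K a⟩ :
              ↥(IntermediateField.adjoin K {a}))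
            (((minpoly K a).map
              (algebraMap K ↥(IntermediateField.adjoin K {a}))) ^ E)).coeff i : Ω)) +
          ((i • γ : Γ) : WithTop Γ) = E • v (Polynomial.aeval X (minpoly K a)) →
        E ∣ i := by
  intro i hi
  set c : ℕ → IntermediateField.adjoin K {a} := fun j => (Polynomial.taylor
    ⟨a, IntermediateField.mem_adjoin_simple_self K a⟩
    (((minpoly K a).map (algebraMap K (IntermediateField.adjoin K {a}))) ^ E)).coeff j
  set M := E • ((minpoly K a).aroots Ω).map (a - ·)
  set i₀ := Multiset.card (M.filter fun β => γ ≤ v β)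
  have hvQ : E • v (aeval X (minpoly K a)) = (M.map fun β => min (γ : WithTop Γ) (v β)).sum := by
    rw [hmp.map_aeval_minpoly, ← Multiset.sum_nsmul, Multiset.map_nsmul, Multiset.map_map]
    rfl
  have hi₀ : v (c i₀) + ((i₀ • γ : Γ) : WithTop Γ) = E • v (aeval X (minpoly K a)) := by
    rw [coe_coeff_taylor_minpoly_pow hmp.1.isIntegral, hvQ, WithTop.coe_nsmul,
      v.map_coeff_prod_X_add_C_add_nsmul]
  have hE : E ∣ i₀ := by
    simp only [i₀, M, Multiset.filter_nsmul, Multiset.card_nsmul]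
    exact dvd_mul_right _ _
  have hc₀ : v (c i₀) ≠ ⊤ := by
    intro h
    rw [h, top_add, hvQ] at hi₀
    exact WithTop.multiset_sum_ne_top (by simp) hi₀.symm
  have hmod := modEq_addOrderOf_of_map_add_nsmul_eq v (c i).2 (c i₀).2 hc₀ (hi.trans hi₀.symm)
  rw [QuotientAddGroup.addOrderOf_mk_eq_of_minimal hE0 hEmem hEmin] at hmod
  exact (hmod.dvd_iff dvd_rfl).2 hE

/-- With `E` least positive such that `Eγ ∈ vK(a)` and
`Q^E = Σ c_i (X-a)^i` over `K(a)`: if `v c_i + iγ = E·vQ` then `E ∣ i`. -/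
theorem stmt_5 {K Ω Γ : Type*} [Field K] [Field Ω] [Algebra K Ω] [IsAlgClosed Ω]
    [AddCommGroup Γ] [LinearOrder Γ] [IsOrderedAddMonoid Γ]
    (v : AddValuation Ω (WithTop Γ)) (X : Ω) (hX : Transcendental K X)
    [Algebra.IsAlgebraic ↥(IntermediateField.adjoin K {X}) Ω]
    (hrt : ResidueTrans K v X) (a : Ω) (γ : Γ) (hmp : IsMinimalPair K v X a γ)
    (E : ℕ) (hE0 : 0 < E) (hEmem : E • γ ∈ valGroup K v (IntermediateField.adjoin K {a}))
    (hEmin : ∀ E' : ℕ, 0 < E' → E' • γ ∈ valGroup K v (IntermediateField.adjoin K {a}) → E ≤ E') :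
    ∀ i : ℕ,
      v (((Polynomial.taylor
            (⟨a, IntermediateField.mem_adjoin_simple_self K a⟩ :
              ↥(IntermediateField.adjoin K {a}))
            (((minpoly K a).map
              (algebraMap K ↥(IntermediateField.adjoin K {a}))) ^ E)).coeff i : Ω)) +
          ((i • γ : Γ) : WithTop Γ) = E • v (Polynomial.aeval X (minpoly K a)) →
        E ∣ i :=
  stmt_5_general v X a γ hmp E hE0 hEmem hEmin

end ValPaper
end

section
/- Let (K(X)|K,v) be a residue transcendental extension with minimal pair of definition (a,γ). Embed vK̄ into the lexicographically ordered group vK̄ ⊕ ℤ via α ↦ (α,0), set Γ := (γ,-1), and let w := v_{a,Γ} be the valuation on K̄(X) defined on polynomials Σ c_i (X-a)^i by w(Σ c_i (X-a)^i) = min_i (v(c_i) + iΓ). Then (a,Γ) is a minimal pair of definition for w over K, w is value transcendental, and j(a,K,γ) = j(a,K,Γ), where j(a,K,δ) denotes the number of K-conjugates a' of a (counted with multiplicity, including a) with v(a - a') ≥ δ. -/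
open IntermediateField Polynomial

namespace ValPaper

variable {Ω Γ : Type*} [Field Ω] [AddCommGroup Γ] [LinearOrder Γ] [IsOrderedAddMonoid Γ]

/-!
On constants `c ∈ K̄` the monomial valuation is `w c = (v c, 0)`, and since `-1 < 0` in the
second coordinate, `(γ, -1) ≤ (v c, 0)` iff `γ ≤ v c`. Applied to `c = a - b` this transfers the
minimal pair conditions and the count `j(a, K, ·)` from `γ` to `Γ = (γ, -1)`, while
`w (X - c) = min ((v (a - c), 0), Γ) ≤ Γ`. For value transcendence, look at `f = minpoly K a`
evaluated at `X`: the constant Taylor coefficient `f(a)` vanishes, so the minimum defining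
`w (f X)` is attained at some index `i ≥ 1` and has second coordinate `-i`, whereas every value
of `K` has second coordinate `0`.
-/

section LexOrder

variable {G : Type*}

def lexSnd [AddZeroClass G] : G ×ₗ ℤ →+ ℤ :=
  (AddMonoidHom.snd G ℤ).comp (toLexAddEquiv (G × ℤ)).symm.toAddMonoidHom

@[simp]
lemma lexSnd_toLex [AddZeroClass G] (g : G) (n : ℤ) : lexSnd (toLex (g, n)) = n := rfl

lemma toLex_neg_one_le_toLex_zero_iff [PartialOrder G] (γ δ : G) :
    toLex (γ, (-1 : ℤ)) ≤ toLex (δ, (0 : ℤ)) ↔ γ ≤ δ := by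
  rw [Prod.Lex.toLex_le_toLex']
  simp

lemma coe_toLex_neg_one_le_map_iff [PartialOrder G] (γ : G) (t : WithTop G) :
    ((toLex (γ, (-1 : ℤ)) : G ×ₗ ℤ) : WithTop (G ×ₗ ℤ)) ≤
        WithTop.map (fun g : G => toLex (g, (0 : ℤ))) t ↔ (γ : WithTop G) ≤ t := by
  cases t <;> simp [toLex_neg_one_le_toLex_zero_iff]

end LexOrder

section MonomialValuation

variable {K : Type*} [Field K] [Algebra K Ω]

/-- `w` is the monomial valuation `v_{a,Δ}` on `A[X]`, where `vA` is embedded into `Γ ×ₗ ℤ`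
as `Γ × {0}`. -/
def IsMonomialValuation (v : AddValuation Ω (WithTop Γ)) (w : AddValuation Ω (WithTop (Γ ×ₗ ℤ)))
    (X : Ω) {A : IntermediateField K Ω} (a : A) (Δ : Γ ×ₗ ℤ) : Prop :=
  ∀ f : A[X], w (aeval X f) =
    (Finset.range (f.natDegree + 1)).inf fun i =>
      WithTop.map (fun g : Γ => toLex (g, (0 : ℤ))) (v ((taylor a f).coeff i : Ω)) +
        ((i • Δ : Γ ×ₗ ℤ) : WithTop (Γ ×ₗ ℤ))

namespace IsMonomialValuation

variable {v : AddValuation Ω (WithTop Γ)} {w : AddValuation Ω (WithTop (Γ ×ₗ ℤ))} {X : Ω}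
  {A : IntermediateField K Ω} {a : A} {Δ : Γ ×ₗ ℤ}

theorem apply_coe (h : IsMonomialValuation v w X a Δ) (c : A) :
    w c = WithTop.map (fun g : Γ => toLex (g, (0 : ℤ))) (v c) := by
  simpa using h (C c)

theorem apply_X_sub_coe (h : IsMonomialValuation v w X a Δ) (c : A) :
    w (X - c) = min (WithTop.map (fun g : Γ => toLex (g, (0 : ℤ))) (v (a - c))) Δ := by
  have htaylor : taylor a (Polynomial.X - C c) = Polynomial.X + C (a - c) := by
    rw [map_sub, taylor_X, taylor_C, C_sub, add_sub_assoc]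
  have haeval : X - c = aeval X (Polynomial.X - C c) := by simp
  rw [haeval, h, natDegree_X_sub_C, htaylor, min_comm]
  simp [Finset.range_add_one, coeff_C, Prod.mk_zero_zero]

theorem apply_X_sub_self (h : IsMonomialValuation v w X a Δ) : w (X - a) = Δ := by
  simpa using h.apply_X_sub_coe a

theorem exists_apply_aeval_eq_of_eval_eq_zero (h : IsMonomialValuation v w X a Δ) {f : A[X]}
    (hf : f ≠ 0) (hfa : f.eval a = 0) :
    ∃ δ : Γ, ∃ i : ℕ, 0 < i ∧
      w (aeval X f) = ((toLex (δ, (0 : ℤ)) + i • Δ : Γ ×ₗ ℤ) : WithTop (Γ ×ₗ ℤ)) := by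
  set t : ℕ → WithTop (Γ ×ₗ ℤ) := fun i =>
    WithTop.map (fun g : Γ => toLex (g, (0 : ℤ))) (v ((taylor a f).coeff i : Ω)) +
      ((i • Δ : Γ ×ₗ ℤ) : WithTop (Γ ×ₗ ℤ))
  obtain ⟨i, -, hmin⟩ :=
    Finset.exists_mem_eq_inf (Finset.range (f.natDegree + 1)) Finset.nonempty_range_add_one t
  have htop : t f.natDegree ≠ ⊤ := WithTop.add_ne_top.mpr ⟨by simp [hf], WithTop.coe_ne_top⟩
  have hti : t i ≠ ⊤ :=
    ne_top_of_le_ne_top htop (hmin ▸ Finset.inf_le (Finset.self_mem_range_succ _))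
  have hi : i ≠ 0 := by
    rintro rfl
    simp [t, taylor_coeff_zero, hfa] at hti
  obtain ⟨δ, hδ⟩ := WithTop.ne_top_iff_exists.mp
    (fun hv : v ((taylor a f).coeff i : Ω) = ⊤ => hti (by simp [t, hv]))
  refine ⟨δ, i, Nat.pos_of_ne_zero hi, ?_⟩
  rw [h f, hmin]
  simp [t, ← hδ]

theorem valGroup_bot_le_ker_lexSnd (h : IsMonomialValuation v w X a Δ) :
    valGroup K w ⊥ ≤ lexSnd.ker := by
  rw [valGroup, AddSubgroup.closure_le]
  rintro g ⟨y, hy, hy0, hyg⟩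
  obtain ⟨k, rfl⟩ := IntermediateField.mem_bot.mp hy
  obtain ⟨δ, hδ⟩ := WithTop.ne_top_iff_exists.mp (v.ne_top_iff.mpr hy0)
  have hwk : w (algebraMap K Ω k) =
      WithTop.map (fun g : Γ => toLex (g, (0 : ℤ))) (v (algebraMap K Ω k)) :=
    h.apply_coe (algebraMap K A k)
  rw [hyg, ← hδ, WithTop.map_coe, WithTop.coe_inj] at hwk
  simp [hwk]

theorem valueTrans (h : IsMonomialValuation v w X a Δ) (hΔ : lexSnd Δ ≠ 0)
    (hX : Transcendental K X) (ha : IsAlgebraic K a) : ValueTrans K w X := by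
  have hq : minpoly K a ≠ 0 := minpoly.ne_zero ha.isIntegral
  obtain ⟨δ, i, hi, hwq⟩ := h.exists_apply_aeval_eq_of_eval_eq_zero (Polynomial.map_ne_zero hq)
    (by rw [eval_map_algebraMap, minpoly.aeval])
  rw [aeval_map_algebraMap] at hwq
  have hmem : aeval X (minpoly K a) ∈ IntermediateField.adjoin K {X} :=
    IntermediateField.algebra_adjoin_le_adjoin K {X} (aeval_mem_adjoin_singleton K X)
  refine ⟨_, AddSubgroup.subset_closure ⟨_, hmem, fun h0 => hX ⟨_, hq, h0⟩, hwq⟩,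
    fun n hn hbot => ?_⟩
  have := h.valGroup_bot_le_ker_lexSnd hbot
  simp [hi.ne', hn.ne', hΔ] at this

variable {γ : Γ}

theorem coe_toLex_neg_one_le_apply_iff (h : IsMonomialValuation v w X a (toLex (γ, -1)))
    {x : Ω} (hx : x ∈ A) :
    ((toLex (γ, (-1 : ℤ)) : Γ ×ₗ ℤ) : WithTop (Γ ×ₗ ℤ)) ≤ w x ↔ (γ : WithTop Γ) ≤ v x := by
  rw [show w x = _ from h.apply_coe ⟨x, hx⟩]
  exact coe_toLex_neg_one_le_map_iff γ _

theorem isMinimalPair (h : IsMonomialValuation v w X a (toLex (γ, -1)))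
    (hA : ∀ b : Ω, IsAlgebraic K b → b ∈ A) (hmp : IsMinimalPair K v X a γ) :
    IsMinimalPair K w X a (toLex (γ, -1)) := by
  refine ⟨hmp.1, h.apply_X_sub_self, fun c hc => ?_, fun b hb hab => hmp.2.2.2 b hb ?_⟩
  · rw [show w (X - c) = _ from h.apply_X_sub_coe ⟨c, hA c hc⟩]
    exact min_le_right _ _
  · exact (h.coe_toLex_neg_one_le_apply_iff (sub_mem a.2 (hA b hb))).mp hab

theorem jnum_eq (h : IsMonomialValuation v w X a (toLex (γ, -1)))
    (hA : ∀ b : Ω, IsAlgebraic K b → b ∈ A) :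
    jnum K v a γ = jnum K w a (toLex (γ, -1)) := by
  refine congrArg Multiset.card (Multiset.filter_congr fun r hr => ?_)
  obtain ⟨hmap, hroot⟩ := mem_aroots.mp hr
  have hr : IsAlgebraic K r := ⟨_, hmap, hroot⟩
  exact (h.coe_toLex_neg_one_le_apply_iff (sub_mem a.2 (hA r hr))).symm

end IsMonomialValuation

end MonomialValuation

theorem stmt_6_general {K Ω Γ : Type*} [Field K] [Field Ω] [Algebra K Ω]
    [AddCommGroup Γ] [LinearOrder Γ] [IsOrderedAddMonoid Γ]
    (v : AddValuation Ω (WithTop Γ)) (X : Ω) (hX : Transcendental K X)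
    (a : Ω) (γ : Γ) (hmp : IsMinimalPair K v X a γ)
    (w : AddValuation Ω (WithTop (Γ ×ₗ ℤ)))
    (hw : ∀ f : Polynomial ↥(algCl K : IntermediateField K Ω),
      w (Polynomial.aeval X f) =
        Finset.inf (Finset.range (f.natDegree + 1)) (fun i =>
          WithTop.map (fun g : Γ => toLex (g, (0 : ℤ)))
              (v (((Polynomial.taylor
                (⟨a, IntermediateField.subset_adjoin K {x : Ω | IsAlgebraic K x} hmp.1⟩ :
                  ↥(algCl K : IntermediateField K Ω)) f).coeff i : Ω))) +
            ((i • toLex (γ, (-1 : ℤ)) : Γ ×ₗ ℤ) : WithTop (Γ ×ₗ ℤ)))) :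
    IsMinimalPair K w X a (toLex (γ, (-1 : ℤ))) ∧ ValueTrans K w X ∧
      jnum K v a γ = jnum K w a (toLex (γ, (-1 : ℤ))) := by
  have hA : ∀ b : Ω, IsAlgebraic K b → b ∈ algCl K :=
    fun b hb => IntermediateField.subset_adjoin K {x : Ω | IsAlgebraic K x} hb
  have h : IsMonomialValuation v w X (⟨a, hA a hmp.1⟩ : algCl K) (toLex (γ, -1)) := hw
  exact ⟨h.isMinimalPair hA hmp,
    h.valueTrans (by simp) hX (IntermediateField.isAlgebraic_iff.mpr hmp.1), h.jnum_eq hA⟩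

/-- Lemma 4.1. For a residue transcendental extension with minimal pair
`(a, γ)`, embedding `vK̄` into `vK̄ ⊕ ℤ` (lex) by `α ↦ (α, 0)` and setting `Γ := (γ, -1)`, the
monomial valuation `w = v_{a,Γ}` has `(a, Γ)` as a minimal pair over `K`, is value
transcendental, and `j(a,K,γ) = j(a,K,Γ)`. -/
theorem stmt_6 {K Ω Γ : Type*} [Field K] [Field Ω] [Algebra K Ω] [IsAlgClosed Ω]
    [AddCommGroup Γ] [LinearOrder Γ] [IsOrderedAddMonoid Γ]
    (v : AddValuation Ω (WithTop Γ)) (X : Ω) (hX : Transcendental K X)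
    [Algebra.IsAlgebraic ↥(IntermediateField.adjoin K {X}) Ω]
    (hrt : ResidueTrans K v X) (a : Ω) (γ : Γ) (hmp : IsMinimalPair K v X a γ)
    (w : AddValuation Ω (WithTop (Γ ×ₗ ℤ)))
    (hw : ∀ f : Polynomial ↥(algCl K : IntermediateField K Ω),
      w (Polynomial.aeval X f) =
        Finset.inf (Finset.range (f.natDegree + 1)) (fun i =>
          WithTop.map (fun g : Γ => toLex (g, (0 : ℤ)))
              (v (((Polynomial.taylor
                (⟨a, IntermediateField.subset_adjoin K {x : Ω | IsAlgebraic K x} hmp.1⟩ :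
                  ↥(algCl K : IntermediateField K Ω)) f).coeff i : Ω))) +
            ((i • toLex (γ, (-1 : ℤ)) : Γ ×ₗ ℤ) : WithTop (Γ ×ₗ ℤ)))) :
    IsMinimalPair K w X a (toLex (γ, (-1 : ℤ))) ∧ ValueTrans K w X ∧
      jnum K v a γ = jnum K w a (toLex (γ, (-1 : ℤ))) :=
  stmt_6_general v X hX a γ hmp w hw

end ValPaper
end

section
/- Let (K(X)|K,v) be a valuation transcendental extension and let (a,γ) and (a',γ) be two minimal pairs of definition for v over K. Then the number of K-conjugates of a within distance γ of a equals the number of K-conjugates of a' within distance γ of a': j(a) = j(a'). In particular, j depends only on the valued extension and not on the choice of minimal pair. -/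
open IntermediateField Polynomial

namespace ValPaper

variable {Ω Γ : Type*} [Field Ω] [AddCommGroup Γ] [LinearOrder Γ] [IsOrderedAddMonoid Γ]

/-!
Both centres lie in the closed ball `B` of radius `γ` around `a`, and `j(a)`, `j(a')` count the
roots in `B` of `f = minpoly K a` and `f' = minpoly K a'`. By minimality `f` and `f'` have the same
degree, so `f - f'` has smaller degree, and by minimality again none of its roots lies in `B`.
For a split polynomial expanded around `a`, the number of its roots in `B` is the last index at
which `v (coeff i) + i γ` attains its minimum (the right end of the slope-`γ` edge of the Newton
polygon); adding a polynomial for which this index is `0` does not change it as long as it is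
positive, hence `j(a) = j(a')`.
-/

section GaussTerms

variable {R : Type*} [CommRing R] (v : AddValuation R (WithTop Γ)) (γ : Γ)

def gaussTerm (P : R[X]) (i : ℕ) : WithTop Γ :=
  v (P.coeff i) + ((i • γ : Γ) : WithTop Γ)

/-- `W` is the minimum of the `γ`-weighted coefficient values of `P` (its Gauss value at radius
`γ`), and `t` the last index attaining it: the right end of the slope-`γ` edge of the Newton
polygon. -/
def IsLastMinimizer (P : R[X]) (t : ℕ) (W : Γ) : Prop :=
  gaussTerm v γ P t = W ∧ (∀ i, (W : WithTop Γ) ≤ gaussTerm v γ P i) ∧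
    ∀ i, t < i → (W : WithTop Γ) < gaussTerm v γ P i

variable {v γ}

lemma min_gaussTerm_le_gaussTerm_add (P Q : R[X]) (i : ℕ) :
    min (gaussTerm v γ P i) (gaussTerm v γ Q i) ≤ gaussTerm v γ (P + Q) i := by
  rw [gaussTerm, gaussTerm, gaussTerm, min_add_add_right, coeff_add]
  gcongr
  exact v.map_add _ _

lemma gaussTerm_C_mul (u : R) (P : R[X]) (i : ℕ) :
    gaussTerm v γ (C u * P) i = v u + gaussTerm v γ P i := by
  rw [gaussTerm, gaussTerm, coeff_C_mul, v.map_mul, add_assoc]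

lemma gaussTerm_X_mul_zero (P : R[X]) : gaussTerm v γ (X * P) 0 = ⊤ := by
  simp [gaussTerm]

lemma gaussTerm_X_mul_succ (P : R[X]) (i : ℕ) :
    gaussTerm v γ (X * P) (i + 1) = gaussTerm v γ P i + γ := by
  rw [gaussTerm, gaussTerm, coeff_X_mul, succ_nsmul, WithTop.coe_add, add_assoc]

namespace IsLastMinimizer

lemma index_unique {P : R[X]} {t t' : ℕ} {W W' : Γ} (h : IsLastMinimizer v γ P t W)
    (h' : IsLastMinimizer v γ P t' W') : t = t' := by
  by_contra hne
  rcases Nat.lt_or_gt_of_ne hne with hlt | hlt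
  · exact (h'.1 ▸ h.2.2 t' hlt).not_ge (h.1 ▸ h'.2.1 t)
  · exact (h.1 ▸ h'.2.2 t hlt).not_ge (h'.1 ▸ h.2.1 t')

lemma add {P H : R[X]} {t : ℕ} {W : Γ} (hP : IsLastMinimizer v γ P t W)
    (hle : ∀ i, (W : WithTop Γ) ≤ gaussTerm v γ H i)
    (hlt : ∀ i, t ≤ i → (W : WithTop Γ) < gaussTerm v γ H i) :
    IsLastMinimizer v γ (P + H) t W := by
  refine ⟨?_, fun i => le_trans (le_min (hP.2.1 i) (hle i)) (min_gaussTerm_le_gaussTerm_add ..),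
    fun i hi => lt_of_lt_of_le (lt_min (hP.2.2 i hi) (hlt i hi.le))
      (min_gaussTerm_le_gaussTerm_add ..)⟩
  have hcoeff : v (P.coeff t) < v (H.coeff t) :=
    (WithTop.add_lt_add_iff_right WithTop.coe_ne_top).1 (hP.1 ▸ hlt t le_rfl)
  rw [gaussTerm, coeff_add, v.map_add_eq_of_lt_left hcoeff]
  exact hP.1

lemma C_mul {P : R[X]} {t : ℕ} {W g : Γ} (hP : IsLastMinimizer v γ P t W) {u : R}
    (hu : v u = g) : IsLastMinimizer v γ (C u * P) t (g + W) := by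
  refine ⟨?_, fun i => ?_, fun i hi => ?_⟩
  · rw [gaussTerm_C_mul, hP.1, hu, WithTop.coe_add]
  · rw [gaussTerm_C_mul, hu, WithTop.coe_add]
    gcongr
    exact hP.2.1 i
  · rw [gaussTerm_C_mul, hu, WithTop.coe_add]
    exact WithTop.add_lt_add_left WithTop.coe_ne_top (hP.2.2 i hi)

lemma X_mul {P : R[X]} {t : ℕ} {W : Γ} (hP : IsLastMinimizer v γ P t W) :
    IsLastMinimizer v γ (X * P) (t + 1) (W + γ) := by
  refine ⟨?_, fun i => ?_, fun i hi => ?_⟩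
  · rw [gaussTerm_X_mul_succ, hP.1, WithTop.coe_add]
  · rcases i with _ | i
    · rw [gaussTerm_X_mul_zero]; exact le_top
    · rw [gaussTerm_X_mul_succ, WithTop.coe_add]
      gcongr
      exact hP.2.1 i
  · obtain ⟨i, rfl⟩ : ∃ j, i = j + 1 := ⟨i - 1, by omega⟩
    rw [gaussTerm_X_mul_succ, WithTop.coe_add]
    exact WithTop.add_lt_add_right WithTop.coe_ne_top (hP.2.2 i (by omega))

lemma X_sub_C_mul_of_le {P : R[X]} {t : ℕ} {W : Γ} (hP : IsLastMinimizer v γ P t W) {c : R}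
    (hc : (γ : WithTop Γ) ≤ v c) : IsLastMinimizer v γ ((X - C c) * P) (t + 1) (W + γ) := by
  have hsplit : (X - C c) * P = X * P + C (-c) * P := by rw [C_neg]; ring
  rw [hsplit]
  refine hP.X_mul.add (fun i => ?_) (fun i hi => ?_)
  · rw [gaussTerm_C_mul, v.map_neg, WithTop.coe_add, add_comm]
    exact add_le_add hc (hP.2.1 i)
  · rw [gaussTerm_C_mul, v.map_neg, WithTop.coe_add, add_comm]
    calc (γ : WithTop Γ) + W < γ + gaussTerm v γ P i :=
          WithTop.add_lt_add_left WithTop.coe_ne_top (hP.2.2 i (by omega))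
      _ ≤ v c + gaussTerm v γ P i := by gcongr

lemma X_sub_C_mul_of_lt {P : R[X]} {t : ℕ} {W g : Γ} (hP : IsLastMinimizer v γ P t W) {c : R}
    (hc : v c = g) (hg : g < γ) : IsLastMinimizer v γ ((X - C c) * P) t (g + W) := by
  have hsplit : (X - C c) * P = C (-c) * P + X * P := by rw [C_neg]; ring
  have hX : ∀ i, ((g + W : Γ) : WithTop Γ) < gaussTerm v γ (X * P) i := by
    rintro (_ | i)
    · rw [gaussTerm_X_mul_zero]; exact WithTop.coe_lt_top _
    · rw [gaussTerm_X_mul_succ, add_comm g, WithTop.coe_add]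
      calc (W : WithTop Γ) + g < W + γ :=
            WithTop.add_lt_add_left WithTop.coe_ne_top (WithTop.coe_lt_coe.2 hg)
        _ ≤ gaussTerm v γ P i + γ := by gcongr; exact hP.2.1 i
  rw [hsplit]
  exact (hP.C_mul (by rw [v.map_neg, hc])).add (fun i => (hX i).le) (fun i _ => hX i)

lemma index_eq_of_add {Q H : R[X]} {t s : ℕ} {W W' W₀ : Γ}
    (hQH : IsLastMinimizer v γ (Q + H) t W) (hQ : IsLastMinimizer v γ Q s W')
    (hH : IsLastMinimizer v γ H 0 W₀) (ht : 1 ≤ t) (hs : 1 ≤ s) : t = s := by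
  rcases le_or_gt W' W₀ with hle | hlt
  · have hle' := WithTop.coe_le_coe.2 hle
    exact hQH.index_unique <| hQ.add (fun i => hle'.trans (hH.2.1 i))
      (fun i hi => hle'.trans_lt (hH.2.2 i (by omega)))
  · have hlt' := WithTop.coe_lt_coe.2 hlt
    have hHQ := hH.add (fun i => hlt'.le.trans (hQ.2.1 i))
      (fun i _ => hlt'.trans_le (hQ.2.1 i))
    rw [add_comm] at hHQ
    have := hQH.index_unique hHQ
    omega

end IsLastMinimizer

lemma isLastMinimizer_one : IsLastMinimizer v γ (1 : R[X]) 0 0 := by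
  refine ⟨by simp [gaussTerm], fun i => ?_, fun i hi => ?_⟩ <;>
    rcases i with _ | i <;> simp_all [gaussTerm, coeff_one]

lemma exists_isLastMinimizer_prod_X_sub_C (S : Multiset R) :
    ∃ W, IsLastMinimizer v γ (S.map (X - C ·)).prod
      (S.countP fun c => (γ : WithTop Γ) ≤ v c) W := by
  induction S using Multiset.induction_on with
  | empty => exact ⟨0, by simpa using isLastMinimizer_one⟩
  | cons c S ih =>
    obtain ⟨W, hW⟩ := ih
    rw [Multiset.map_cons, Multiset.prod_cons, Multiset.countP_cons]
    by_cases hc : (γ : WithTop Γ) ≤ v c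
    · exact ⟨W + γ, by simpa [hc] using hW.X_sub_C_mul_of_le hc⟩
    · obtain ⟨g, hg⟩ := WithTop.ne_top_iff_exists.1 (ne_top_of_lt (not_le.1 hc))
      have hgγ : g < γ := by rw [← WithTop.coe_lt_coe, hg]; exact not_le.1 hc
      exact ⟨g + W, by simpa [hc] using hW.X_sub_C_mul_of_lt hg.symm hgγ⟩

end GaussTerms

section RootCount

variable {v : AddValuation Ω (WithTop Γ)} {γ : Γ}

lemma exists_isLastMinimizer_taylor {p : Polynomial Ω} (hp : p.Splits) (hp0 : p ≠ 0) (a : Ω) :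
    ∃ W, IsLastMinimizer v γ (taylor a p)
      (p.roots.countP fun r => (γ : WithTop Γ) ≤ v (r - a)) W := by
  obtain ⟨W, hW⟩ :=
    exists_isLastMinimizer_prod_X_sub_C (v := v) (γ := γ) (p.roots.map (· - a))
  obtain ⟨g, hg⟩ := WithTop.ne_top_iff_exists.1 (v.ne_top_iff.2 (leadingCoeff_ne_zero.2 hp0))
  have htaylor : taylor a p = C p.leadingCoeff * ((p.roots.map (· - a)).map (X - C ·)).prod := by
    change taylorAlgHom a p = _
    conv_lhs => rw [hp.eq_prod_roots, map_mul, map_multiset_prod]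
    simp only [Multiset.map_map, Function.comp_def, map_sub, taylorAlgHom_apply, taylor_X,
      taylor_C]
    congr! 3
    ring
  rw [Multiset.countP_map, ← Multiset.countP_eq_card_filter] at hW
  exact ⟨g + W, htaylor ▸ hW.C_mul hg.symm⟩

theorem countP_roots_eq_of_sub {p q : Polynomial Ω} (hp : p.Splits) (hq : q.Splits)
    (hpq : (p - q).Splits) (hne : p ≠ q) (a : Ω)
    (hsub : ∀ r ∈ (p - q).roots, ¬ (γ : WithTop Γ) ≤ v (r - a))
    (hp1 : 1 ≤ p.roots.countP fun r => (γ : WithTop Γ) ≤ v (r - a))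
    (hq1 : 1 ≤ q.roots.countP fun r => (γ : WithTop Γ) ≤ v (r - a)) :
    p.roots.countP (fun r => (γ : WithTop Γ) ≤ v (r - a)) =
      q.roots.countP fun r => (γ : WithTop Γ) ≤ v (r - a) := by
  have hp0 : p ≠ 0 := by rintro rfl; simp at hp1
  have hq0 : q ≠ 0 := by rintro rfl; simp at hq1
  obtain ⟨W, hW⟩ := exists_isLastMinimizer_taylor (v := v) (γ := γ) hp hp0 a
  obtain ⟨W', hW'⟩ := exists_isLastMinimizer_taylor (v := v) (γ := γ) hq hq0 a
  obtain ⟨W₀, hW₀⟩ :=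
    exists_isLastMinimizer_taylor (v := v) (γ := γ) hpq (sub_ne_zero.2 hne) a
  rw [Multiset.countP_eq_zero.2 hsub] at hW₀
  rw [show taylor a p = taylor a q + taylor a (p - q) by rw [map_sub]; abel] at hW
  exact hW.index_eq_of_add hW' hW₀ hp1 hq1

end RootCount

lemma le_map_sub_iff_of_le_map_sub {R : Type*} [Ring R] (v : AddValuation R (WithTop Γ))
    {γ : WithTop Γ} {a a' : R} (h : γ ≤ v (a - a')) (r : R) :
    γ ≤ v (r - a') ↔ γ ≤ v (r - a) := by
  constructor <;> intro hr
  · rw [show r - a = r - a' - (a - a') by abel]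
    exact v.map_le_sub hr h
  · rw [show r - a' = r - a + (a - a') by abel]
    exact v.map_le_add hr h

section MinimalPair

variable {K : Type*} [Field K] [Algebra K Ω] {v : AddValuation Ω (WithTop Γ)} {γ : Γ}

lemma jnum_eq_countP_aroots {a c : Ω} (hc : (γ : WithTop Γ) ≤ v (a - c)) :
    jnum K v a γ = ((minpoly K a).aroots Ω).countP fun r => (γ : WithTop Γ) ≤ v (r - c) := by
  rw [jnum, Multiset.countP_eq_card_filter]
  congr 1
  refine Multiset.filter_congr fun r _ => ?_
  rw [v.map_sub_swap, le_map_sub_iff_of_le_map_sub v hc]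

lemma one_le_countP_aroots_minpoly {a c : Ω} (ha : IsIntegral K a)
    (hc : (γ : WithTop Γ) ≤ v (a - c)) :
    1 ≤ ((minpoly K a).aroots Ω).countP fun r => (γ : WithTop Γ) ≤ v (r - c) :=
  Multiset.countP_pos.2 ⟨a, mem_aroots.2 ⟨minpoly.ne_zero ha, minpoly.aeval K a⟩, hc⟩

namespace IsMinimalPair

variable {X a a' : Ω}

lemma le_val_sub (h : IsMinimalPair K v X a γ) (h' : IsMinimalPair K v X a' γ) :
    (γ : WithTop Γ) ≤ v (a - a') := by
  rw [show a - a' = (X - a') - (X - a) by abel]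
  exact v.map_le_sub h'.2.1.ge h.2.1.ge

lemma natDegree_minpoly_le {ρ : Ω} (h : IsMinimalPair K v X a γ) (hρ : IsAlgebraic K ρ)
    (hle : (γ : WithTop Γ) ≤ v (a - ρ)) :
    (minpoly K a).natDegree ≤ (minpoly K ρ).natDegree := by
  have := h.2.2.2 ρ hρ hle
  rwa [adjoin.finrank h.1.isIntegral, adjoin.finrank hρ.isIntegral] at this

lemma natDegree_minpoly_eq (h : IsMinimalPair K v X a γ) (h' : IsMinimalPair K v X a' γ) :
    (minpoly K a).natDegree = (minpoly K a').natDegree :=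
  le_antisymm (h.natDegree_minpoly_le h'.1 (h.le_val_sub h'))
    (h'.natDegree_minpoly_le h.1 (h'.le_val_sub h))

/-- A root of `minpoly K a - minpoly K a'` has degree below `[K(a) : K]`, so minimality keeps it
out of the ball of radius `γ` around `a`. -/
lemma not_le_val_sub_of_mem_aroots_sub (h : IsMinimalPair K v X a γ)
    (h' : IsMinimalPair K v X a' γ) {ρ : Ω}
    (hρ : ρ ∈ (minpoly K a - minpoly K a').aroots Ω) :
    ¬ (γ : WithTop Γ) ≤ v (ρ - a) := by
  intro hle
  obtain ⟨hne, hroot⟩ := mem_aroots.1 hρ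
  have hsub : (minpoly K a - minpoly K a').natDegree < (minpoly K a).natDegree :=
    IsMonicOfDegree.natDegree_sub_lt (minpoly.natDegree_pos h.1.isIntegral).ne'
      ⟨rfl, minpoly.monic h.1.isIntegral⟩
      ⟨(h.natDegree_minpoly_eq h').symm, minpoly.monic h'.1.isIntegral⟩
  have hρa := h.natDegree_minpoly_le ⟨_, hne, hroot⟩ (by rwa [v.map_sub_swap])
  have hρsub := natDegree_le_natDegree (minpoly.degree_le_of_ne_zero K ρ hne hroot)
  omega

end IsMinimalPair

end MinimalPair

theorem stmt_9_general {K Ω Γ : Type*} [Field K] [Field Ω] [Algebra K Ω] [IsAlgClosed Ω]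
    [AddCommGroup Γ] [LinearOrder Γ] [IsOrderedAddMonoid Γ]
    (v : AddValuation Ω (WithTop Γ)) (X : Ω) (a a' : Ω) (γ : Γ)
    (hmp : IsMinimalPair K v X a γ) (hmp' : IsMinimalPair K v X a' γ) :
    jnum K v a γ = jnum K v a' γ := by
  have haa : (γ : WithTop Γ) ≤ v (a - a) := by simp
  have ha'a := hmp'.le_val_sub hmp
  rw [jnum_eq_countP_aroots haa, jnum_eq_countP_aroots ha'a]
  by_cases hf : minpoly K a = minpoly K a'
  · rw [hf]
  refine countP_roots_eq_of_sub (IsAlgClosed.splits _) (IsAlgClosed.splits _)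
    (IsAlgClosed.splits _) ((map_injective _ (algebraMap K Ω).injective).ne hf) a
    (fun ρ hρ => hmp.not_le_val_sub_of_mem_aroots_sub hmp' ?_)
    (one_le_countP_aroots_minpoly hmp.1.isIntegral haa)
    (one_le_countP_aroots_minpoly hmp'.1.isIntegral ha'a)
  rwa [aroots_def, Polynomial.map_sub]

/-- Theorem 1.2. For a valuation transcendental extension, two minimal
pairs `(a, γ)` and `(a', γ)` give `j(a) = j(a')`: `j` is independent of the choice of minimal
pair of definition. -/
theorem stmt_9 {K Ω Γ : Type*} [Field K] [Field Ω] [Algebra K Ω] [IsAlgClosed Ω]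
    [AddCommGroup Γ] [LinearOrder Γ] [IsOrderedAddMonoid Γ]
    (v : AddValuation Ω (WithTop Γ)) (X : Ω) (hX : Transcendental K X)
    [Algebra.IsAlgebraic ↥(IntermediateField.adjoin K {X}) Ω]
    (hvt : ValuationTrans K v X) (a a' : Ω) (γ : Γ)
    (hmp : IsMinimalPair K v X a γ) (hmp' : IsMinimalPair K v X a' γ) :
    jnum K v a γ = jnum K v a' γ :=
  stmt_9_general v X a a' γ hmp hmp'

end ValPaper
end

section
/- Let L|K be a field extension such that K is relatively algebraically closed in L, and let a be algebraic over K. Then K(a) and L are linearly disjoint over K; equivalently, [L(a):L] = [K(a):K] and the minimal polynomial of a over L has coefficients in K. -/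
open IntermediateField Polynomial

/-- Proposition 5.1. If `K` is relatively algebraically closed in `L` and
`a` is algebraic over `K`, then `K(a)` and `L` are linearly disjoint over `K`:
`[L(a):L] = [K(a):K]` and the minimal polynomial of `a` over `L` has coefficients in `K`. -/
theorem stmt_10 {K L Ω : Type*} [Field K] [Field L] [Field Ω]
    [Algebra K L] [Algebra L Ω] [Algebra K Ω] [IsScalarTower K L Ω]
    (hrac : ∀ x : L, IsAlgebraic K x → x ∈ (⊥ : IntermediateField K L))
    (a : Ω) (ha : IsAlgebraic K a) :
    Module.finrank L ↥(IntermediateField.adjoin L {a}) =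
        Module.finrank K ↥(IntermediateField.adjoin K {a}) ∧
      ∀ i : ℕ, (minpoly L a).coeff i ∈ (algebraMap K L).range := by
  have hKa : IsIntegral K a := ha.isIntegral
  have hLa : IsIntegral L a := hKa.tower_top
  have hdvd : minpoly L a ∣ (minpoly K a).map (algebraMap K L) :=
    minpoly.dvd _ _ (by
      rw [aeval_map_algebraMap]
      exact minpoly.aeval K a)
  -- coefficients of minpoly L a are integral over K, hence algebraic, hence in K
  have hlift : minpoly L a ∈ lifts (algebraMap (integralClosure K L) L) :=
    integralClosure.mem_lifts_of_monic_of_dvd_map L (minpoly.monic hKa)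
      (minpoly.monic hLa) hdvd
  have hcoeff : ∀ i : ℕ, (minpoly L a).coeff i ∈ (algebraMap K L).range := by
    intro i
    obtain ⟨c, hc⟩ := ((lifts_iff_coeff_lifts (minpoly L a)).mp hlift i : _)
    have : IsAlgebraic K ((minpoly L a).coeff i) := by
      rw [← hc]
      exact (c.2.isAlgebraic)
    simpa [IntermediateField.mem_bot] using hrac _ this
  refine ⟨?_, hcoeff⟩
  -- build a polynomial over K mapping to minpoly L a
  have hlift' : minpoly L a ∈ lifts (algebraMap K L) := by
    rw [lifts_iff_coeff_lifts]
    exact hcoeff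
  obtain ⟨p, hp, hpdeg, hpmonic⟩ :=
    lifts_and_natDegree_eq_and_monic hlift' (minpoly.monic hLa)
  have hpa : Polynomial.aeval a p = 0 := by
    have : Polynomial.aeval a (p.map (algebraMap K L)) = 0 := by
      rw [hp]; exact minpoly.aeval L a
    rwa [aeval_map_algebraMap] at this
  have h1 : (minpoly K a).natDegree ≤ p.natDegree :=
    natDegree_le_natDegree (minpoly.degree_le_of_ne_zero K a hpmonic.ne_zero hpa)
  have h2 : (minpoly L a).natDegree ≤ (minpoly K a).natDegree := by
    have := natDegree_le_natDegree (degree_le_of_dvd hdvd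
      ((minpoly.monic hKa).map (algebraMap K L)).ne_zero)
    rwa [natDegree_map] at this
  have hdeg : (minpoly L a).natDegree = (minpoly K a).natDegree :=
    le_antisymm h2 (hpdeg ▸ h1)
  rw [IntermediateField.adjoin.finrank hLa, IntermediateField.adjoin.finrank hKa, hdeg]
end

section
/- Let (a,γ) be a minimal pair of definition for a valuation transcendental extension (K(X)|K,v), so that, as in (MP2), v(a-a') ≥ γ implies [K(a):K] ≤ [K(a'):K] for all a' ∈ K̄, and let b ∈ K̄ with b ∈ K(a). Then (a,γ) is also a minimal pair of definition for v over K(b). -/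
open IntermediateField Polynomial

namespace ValPaper

variable {Ω Γ : Type*} [Field Ω] [AddCommGroup Γ] [LinearOrder Γ] [IsOrderedAddMonoid Γ]

private lemma stmt17_key {Ω : Type*} [Field Ω] (K : Type*) [Field K] [Algebra K Ω] {a b b' : Ω}
    (ha : IsIntegral K a) (hb' : IsIntegral K b') (hb : b ∈ IntermediateField.adjoin K {a})
    (h : Module.finrank K ↥(IntermediateField.adjoin K {a}) ≤
      Module.finrank K ↥(IntermediateField.adjoin K {b'})) :
    Module.finrank ↥(IntermediateField.adjoin K {b})
        ↥(IntermediateField.adjoin (↥(IntermediateField.adjoin K {b})) {a}) ≤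
      Module.finrank ↥(IntermediateField.adjoin K {b})
        ↥(IntermediateField.adjoin (↥(IntermediateField.adjoin K {b})) {b'}) := by
  open Module in
  haveI : FiniteDimensional K ↥(adjoin K {a}) := adjoin.finiteDimensional ha
  haveI : FiniteDimensional K ↥(adjoin K {b'}) := adjoin.finiteDimensional hb'
  have hbint : IsIntegral K b := by
    have := (Algebra.IsIntegral.of_finite K ↥(adjoin K {a})).isIntegral
      (⟨b, hb⟩ : adjoin K {a})
    simpa using this.map (IsScalarTower.toAlgHom K ↥(adjoin K {a}) Ω)
  haveI : FiniteDimensional K ↥(adjoin K {b}) := adjoin.finiteDimensional hbint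
  have h1 : (adjoin (↥(adjoin K {b})) {a}).restrictScalars K = adjoin K ({b} ∪ {a}) :=
    adjoin_adjoin_left K {b} {a}
  have h2 : (adjoin (↥(adjoin K {b})) {b'}).restrictScalars K = adjoin K ({b} ∪ {b'}) :=
    adjoin_adjoin_left K {b} {b'}
  have h3 : adjoin K ({b} ∪ {a}) = adjoin K {a} := by
    apply le_antisymm
    · rw [adjoin_le_iff]
      rintro x (rfl | rfl)
      · exact hb
      · exact IntermediateField.mem_adjoin_simple_self K _
    · exact adjoin.mono K _ _ Set.subset_union_right
  haveI : FiniteDimensional K ↥(adjoin K ({b} ∪ {b'} : Set Ω)) := by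
    haveI : Finite ({b} ∪ {b'} : Set Ω) := Set.Finite.union
      (Set.finite_singleton b) (Set.finite_singleton b') |>.to_subtype
    exact finiteDimensional_adjoin (fun x hx => by
      rcases hx with rfl | rfl
      · exact hbint
      · exact hb')
  have t1 : Module.finrank K ↥(adjoin K {b}) *
      Module.finrank ↥(adjoin K {b}) ↥(adjoin (↥(adjoin K {b})) {a})
      = Module.finrank K ↥(adjoin K {a}) := by
    rw [Module.finrank_mul_finrank]
    show Module.finrank K ↥((adjoin (↥(adjoin K {b})) {a}).restrictScalars K) = _
    rw [h1, h3]
  have t2 : Module.finrank K ↥(adjoin K {b}) *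
      Module.finrank ↥(adjoin K {b}) ↥(adjoin (↥(adjoin K {b})) {b'})
      = Module.finrank K ↥(adjoin K ({b} ∪ {b'} : Set Ω)) := by
    rw [Module.finrank_mul_finrank]
    show Module.finrank K ↥((adjoin (↥(adjoin K {b})) {b'}).restrictScalars K) = _
    rw [h2]
  have hle : Module.finrank K ↥(adjoin K {b'}) ≤
      Module.finrank K ↥(adjoin K ({b} ∪ {b'} : Set Ω)) := by
    have hsub : adjoin K {b'} ≤ adjoin K ({b} ∪ {b'} : Set Ω) :=
      adjoin.mono K _ _ Set.subset_union_right
    exact LinearMap.finrank_le_finrank_of_injective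
      (f := (IntermediateField.inclusion hsub).toLinearMap)
      (IntermediateField.inclusion hsub).injective
  have hd : 0 < Module.finrank K ↥(adjoin K {b}) := Module.finrank_pos
  exact Nat.le_of_mul_le_mul_left (by rw [t1, t2]; exact le_trans h hle) hd

/-- If `(a, γ)` is a minimal pair of definition for `v` over `K` and
`b ∈ K(a)`, then `(a, γ)` is also a minimal pair of definition for `v` over `K(b)`. -/
theorem stmt_17 {K Ω Γ : Type*} [Field K] [Field Ω] [Algebra K Ω] [IsAlgClosed Ω]
    [AddCommGroup Γ] [LinearOrder Γ] [IsOrderedAddMonoid Γ]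
    (v : AddValuation Ω (WithTop Γ)) (X : Ω) (hX : Transcendental K X)
    [Algebra.IsAlgebraic ↥(IntermediateField.adjoin K {X}) Ω]
    (hvt : ValuationTrans K v X) (a : Ω) (γ : Γ) (hmp : IsMinimalPair K v X a γ)
    (b : Ω) (hb : b ∈ IntermediateField.adjoin K {a}) :
    IsMinimalPair ↥(IntermediateField.adjoin K {b}) v X a γ := by
  obtain ⟨halg, hval, hmax, hmp2⟩ := hmp
  have haint : IsIntegral K a := halg.isIntegral
  haveI : FiniteDimensional K ↥(adjoin K {a}) := adjoin.finiteDimensional haint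
  have hbint : IsIntegral K b := by
    have := (Algebra.IsIntegral.of_finite K ↥(adjoin K {a})).isIntegral
      (⟨b, hb⟩ : adjoin K {a})
    simpa using this.map (IsScalarTower.toAlgHom K ↥(adjoin K {a}) Ω)
  haveI : FiniteDimensional K ↥(adjoin K {b}) := adjoin.finiteDimensional hbint
  haveI : Algebra.IsIntegral K ↥(adjoin K {b}) := Algebra.IsIntegral.of_finite _ _
  refine ⟨halg.tower_top _, hval, ?_, ?_⟩
  · intro c hc
    exact hmax c (isIntegral_trans c hc.isIntegral).isAlgebraic
  · intro b' hb' hγ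
    have hb'K : IsIntegral K b' := isIntegral_trans b' hb'.isIntegral
    exact stmt17_key K haint hb'K hb (hmp2 b' hb'K.isAlgebraic hγ)

end ValPaper
end
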